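/- arXiv:2505.05788 — 4 statements merged into one kernel-verified Lean document; each statement's English description precedes it below -/
import Mathlib

section
/- Let E = {ξ₁, ..., ξ_N} be a finite set of points on the unit circle in ℂ, and let (a_m) be the sequence of complex numbers defined by the power series expansion 1/∏_{j=1}^N (1 - conj(ξ_j) z) = ∑_{m=0}^∞ a_m z^m (valid for |z| < 1). Then the sequence (a_m) is bounded. -/
/-!
Since the `ξ j` are distinct, `1 / ∏ j, (1 - conj (ξ j) z)` has the partial fraction decomposition
`∑ j, c j / (1 - conj (ξ j) z)`. Expanding each term as a geometric series and comparing
coefficients gives `a m = ∑ j, c j * conj (ξ j) ^ m`, and `|ξ j| = 1` bounds this by `∑ j, |c j|`.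
-/

open Finset Polynomial

theorem hasFPowerSeriesOnBall_ofScalars_of_hasSum {𝕜 : Type*} [RCLike 𝕜] {c : ℕ → 𝕜}
    {f : 𝕜 → 𝕜} {r : NNReal} (hr : 0 < r)
    (hf : ∀ z : 𝕜, ‖z‖ < r → HasSum (fun m => c m * z ^ m) (f z)) :
    HasFPowerSeriesOnBall f (.ofScalars 𝕜 c) 0 r := by
  refine ⟨?_, by exact_mod_cast hr, fun {y} hy => ?_⟩
  · refine ENNReal.le_of_forall_nnreal_lt fun s hs => ?_
    have hs : ‖((s : ℝ) : 𝕜)‖ < r := by simpa using hs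
    refine FormalMultilinearSeries.le_radius_of_tendsto _ (l := 0) ?_
    simpa [FormalMultilinearSeries.ofScalars_norm] using
      (hf _ hs).summable.norm.tendsto_atTop_zero
  · have hy : ‖y‖ < r := by simpa [← ofReal_norm] using hy
    simpa [FormalMultilinearSeries.ofScalars_apply_eq, mul_comm] using hf y hy

theorem eq_of_hasSum_mul_pow_of_hasSum_mul_pow {𝕜 : Type*} [RCLike 𝕜] {c d : ℕ → 𝕜}
    {f : 𝕜 → 𝕜} {r : NNReal} (hr : 0 < r)
    (hc : ∀ z : 𝕜, ‖z‖ < r → HasSum (fun m => c m * z ^ m) (f z))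
    (hd : ∀ z : 𝕜, ‖z‖ < r → HasSum (fun m => d m * z ^ m) (f z)) : c = d :=
  FormalMultilinearSeries.ofScalars_series_injective (𝕜 := 𝕜) 𝕜 <|
    (hasFPowerSeriesOnBall_ofScalars_of_hasSum hr hc).hasFPowerSeriesAt.eq_formalMultilinearSeries
      (hasFPowerSeriesOnBall_ofScalars_of_hasSum hr hd).hasFPowerSeriesAt

section PartialFractions

variable {K : Type*} [Field K] {ι : Type*} [Fintype ι] [DecidableEq ι]

def partialFractionCoeff (w : ι → K) (j : ι) : K :=
  (∏ k ∈ univ.erase j, (1 - w k / w j))⁻¹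

theorem sum_partialFractionCoeff_mul_prod_erase [Nonempty ι] {w : ι → K}
    (hw : Function.Injective w) (hw0 : ∀ j, w j ≠ 0) (z : K) :
    ∑ j, partialFractionCoeff w j * ∏ k ∈ univ.erase j, (1 - w k * z) = 1 := by
  have hinv : Set.InjOn (fun j => (w j)⁻¹) (univ : Finset ι) :=
    fun j _ k _ h => hw (inv_injective h)
  have := congrArg (eval z) (Lagrange.sum_basis hinv univ_nonempty)
  rw [eval_finsetSum, eval_one] at this
  -- `∏ k ≠ j, (1 - w k * z) / (1 - w k / w j)` is the Lagrange basis polynomial at the nodes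
  -- `(w k)⁻¹`, evaluated at `z`.
  refine Eq.trans (sum_congr rfl fun j _ => ?_) this
  rw [partialFractionCoeff, Lagrange.basis, eval_prod, ← div_eq_inv_mul, ← prod_div_distrib]
  refine prod_congr rfl fun k hk => ?_
  have hkj : w k ≠ w j := hw.ne (ne_of_mem_erase hk)
  have hk0 := hw0 k
  have hj0 := hw0 j
  rw [Lagrange.basisDivisor, eval_mul, eval_C, eval_sub, eval_X, eval_C]
  field_simp
  ring

theorem inv_prod_one_sub_mul_eq_sum_partialFractionCoeff [Nonempty ι] {w : ι → K}
    (hw : Function.Injective w) (hw0 : ∀ j, w j ≠ 0) {z : K} (hz : ∀ j, 1 - w j * z ≠ 0) :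
    (∏ j, (1 - w j * z))⁻¹ = ∑ j, partialFractionCoeff w j * (1 - w j * z)⁻¹ := by
  refine (eq_inv_of_mul_eq_one_left ?_).symm
  rw [sum_mul]
  refine Eq.trans (sum_congr rfl fun j _ => ?_) (sum_partialFractionCoeff_mul_prod_erase hw hw0 z)
  rw [← mul_prod_erase univ _ (mem_univ j), mul_assoc, inv_mul_cancel_left₀ (hz j)]

theorem hasSum_inv_prod_one_sub_mul {𝕜 : Type*} [NormedField 𝕜] [CompleteSpace 𝕜] [Nonempty ι]
    {w : ι → 𝕜} (hw : Function.Injective w) (hw0 : ∀ j, w j ≠ 0) {z : 𝕜} (hz : ∀ j, ‖w j * z‖ < 1) :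
    HasSum (fun m => (∑ j, partialFractionCoeff w j * w j ^ m) * z ^ m)
      (∏ j, (1 - w j * z))⁻¹ := by
  have hz0 : ∀ j, 1 - w j * z ≠ 0 := fun j h => by
    simpa [← sub_eq_zero.mp h] using (hz j).ne
  rw [inv_prod_one_sub_mul_eq_sum_partialFractionCoeff hw hw0 hz0]
  simp_rw [sum_mul, mul_assoc, ← mul_pow]
  exact hasSum_sum fun j _ => (hasSum_geometric_of_norm_lt_one (hz j)).mul_left _

end PartialFractions

/-- The Taylor coefficients of `z ↦ 1/∏_{j}(1 - conj(ξ j) z)`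
(for ξ j distinct points on the unit circle) form a bounded sequence. -/
theorem stmt_0 {N : ℕ} (hN : 0 < N) (ξ : Fin N → ℂ) (hξ : ∀ j, ‖ξ j‖ = 1)
    (hinj : Function.Injective ξ) (a : ℕ → ℂ)
    (ha : ∀ z : ℂ, ‖z‖ < 1 →
      HasSum (fun m => a m * z ^ m) (∏ j, (1 - (starRingEnd ℂ) (ξ j) * z))⁻¹) :
    ∃ C : ℝ, ∀ m, ‖a m‖ ≤ C := by
  set w : Fin N → ℂ := fun j => starRingEnd ℂ (ξ j)
  have : Nonempty (Fin N) := ⟨⟨0, hN⟩⟩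
  have hw : Function.Injective w := (star_injective (R := ℂ)).comp hinj
  have hw1 : ∀ j, ‖w j‖ = 1 := by simp [w, hξ]
  have hw0 : ∀ j, w j ≠ 0 := fun j => norm_ne_zero_iff.mp (by simp [hw1 j])
  have ha_eq : a = fun m => ∑ j, partialFractionCoeff w j * w j ^ m :=
    eq_of_hasSum_mul_pow_of_hasSum_mul_pow one_pos (by simpa using ha) fun z hz =>
      hasSum_inv_prod_one_sub_mul hw hw0 fun j => by simpa [hw1 j] using hz
  refine ⟨∑ j, ‖partialFractionCoeff w j‖, fun m => ?_⟩
  calc ‖a m‖ ≤ ∑ j, ‖partialFractionCoeff w j * w j ^ m‖ := ha_eq ▸ norm_sum_le _ _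
    _ = ∑ j, ‖partialFractionCoeff w j‖ := by simp [hw1]
end

section
/- Let X be a reflexive Banach space and T : X → X a bounded linear operator that is power bounded (i.e., sup_{n≥0} ‖Tⁿ‖ < ∞). Then X decomposes as the direct sum X = Ker(I - T) ⊕ closure(Ran(I - T)). -/
/-!
The Cesàro averages `Aₙ = n⁻¹ ∑_{k<n} Tᵏ` are uniformly bounded, fix `Ker(I - T)` and satisfy
`Aₙ (I - T) = n⁻¹ (I - Tⁿ) → 0`; by equicontinuity `Aₙ → 0` pointwise on the closure of
`Ran(I - T)`, so a fixed vector there vanishes. For the sum, reflexivity makes bounded sets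
relatively weakly compact, so `Aₙ x` has a weak limit `y` along an ultrafilter. Then `y` is fixed
because `T Aₙ x - Aₙ x → 0`, and `x - y` lies in the closure of `Ran(I - T)` because
`x - Aₙ x ∈ Ran(I - T)` and norm-closed subspaces are weakly closed.
-/

open Filter Topology Finset Bornology Function

section

variable {𝕜 X : Type*} [RCLike 𝕜] [NormedAddCommGroup X] [NormedSpace 𝕜 X]

theorem Submodule.isClosed_image_toWeakSpace {M : Submodule 𝕜 X} (hM : IsClosed (M : Set X)) :
    IsClosed (toWeakSpace 𝕜 X '' M) := by
  let : NormedSpace ℝ X := NormedSpace.restrictScalars ℝ 𝕜 X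
  have h := (M.restrictScalars ℝ).convex.toWeakSpace_closure 𝕜
  rw [Submodule.coe_restrictScalars, hM.closure_eq] at h
  exact closure_eq_iff_isClosed.1 h.symm

theorem NormedSpace.exists_tendsto_toWeakSpace
    (hrefl : Surjective (NormedSpace.inclusionInDoubleDual 𝕜 X)) {ι : Type*} (U : Ultrafilter ι)
    {u : ι → X} (hu : IsBounded (Set.range u)) :
    ∃ y, Tendsto (fun i => toWeakSpace 𝕜 X (u i)) U (𝓝 (toWeakSpace 𝕜 X y)) := by
  have hS : IsCompact (closure (toWeakSpace 𝕜 X '' Set.range u)) := by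
    refine NormedSpace.isCompact_closure_of_isBounded 𝕜 X _
      (by rwa [(toWeakSpace 𝕜 X).injective.preimage_image]) fun φ _ => ?_
    obtain ⟨y, hy⟩ := hrefl (WeakDual.toStrongDual φ)
    exact ⟨y, hy⟩
  obtain ⟨w, -, hw⟩ := hS.ultrafilter_le_nhds (U.map (toWeakSpace 𝕜 X ∘ u)) <|
    le_principal_iff.2 <| mem_map.2 <| univ_mem' fun i => subset_closure ⟨u i, ⟨i, rfl⟩, rfl⟩
  exact ⟨(toWeakSpace 𝕜 X).symm w, by rw [LinearEquiv.apply_symm_apply]; exact hw⟩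

namespace ContinuousLinearMap

noncomputable def birkhoffAverage (T : X →L[𝕜] X) (n : ℕ) : X →L[𝕜] X :=
  (n : 𝕜)⁻¹ • ∑ k ∈ range n, T ^ k

variable {T : X →L[𝕜] X} {C : ℝ}

theorem birkhoffAverage_apply (n : ℕ) (x : X) :
    T.birkhoffAverage n x = _root_.birkhoffAverage 𝕜 T id n x := by
  simp [ContinuousLinearMap.birkhoffAverage, _root_.birkhoffAverage, birkhoffSum]

theorem norm_birkhoffAverage_le (hT : ∀ n : ℕ, ‖T ^ n‖ ≤ C) (n : ℕ) :
    ‖T.birkhoffAverage n‖ ≤ C := by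
  have hC : 0 ≤ C := (norm_nonneg _).trans (hT 0)
  rcases eq_or_ne n 0 with rfl | hn
  · simpa [ContinuousLinearMap.birkhoffAverage] using hC
  calc ‖T.birkhoffAverage n‖ ≤ (n : ℝ)⁻¹ * ∑ k ∈ range n, ‖T ^ k‖ := by
        rw [ContinuousLinearMap.birkhoffAverage, norm_smul, norm_inv, RCLike.norm_natCast]
        gcongr
        exact norm_sum_le _ _
    _ ≤ (n : ℝ)⁻¹ * ∑ _k ∈ range n, C := by gcongr with k; exact hT k
    _ = C := by simp [hn]

theorem commute_birkhoffAverage (n : ℕ) : Commute T (T.birkhoffAverage n) :=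
  (Commute.sum_right _ _ _ fun k _ => (Commute.refl T).pow_right k).smul_right _

theorem sub_pow_apply_mem_range (k : ℕ) (x : X) :
    x - (T ^ k) x ∈ LinearMap.range ((1 - T : X →L[𝕜] X) : X →ₗ[𝕜] X) :=
  ⟨(∑ j ∈ range k, T ^ j) x, by simpa using congr($(mul_neg_geom_sum T k) x)⟩

theorem sub_birkhoffAverage_mem_range {n : ℕ} (hn : n ≠ 0) (x : X) :
    x - T.birkhoffAverage n x ∈ LinearMap.range ((1 - T : X →L[𝕜] X) : X →ₗ[𝕜] X) := by
  have h : x - T.birkhoffAverage n x = (n : 𝕜)⁻¹ • ∑ k ∈ range n, (x - (T ^ k) x) := by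
    simp [ContinuousLinearMap.birkhoffAverage, sum_sub_distrib, smul_sub,
      ← Nat.cast_smul_eq_nsmul 𝕜, hn]
  rw [h]
  exact Submodule.smul_mem _ _ (Submodule.sum_mem _ fun k _ => sub_pow_apply_mem_range k x)

theorem tendsto_birkhoffAverage_apply_one_sub (hT : ∀ n : ℕ, ‖T ^ n‖ ≤ C) (x : X) :
    Tendsto (fun n => T.birkhoffAverage n ((1 - T) x)) atTop (𝓝 0) := by
  have horbit : IsBounded (Set.range fun n => (⇑T)^[n] x) :=
    isBounded_iff_forall_norm_le.2 ⟨C * ‖x‖, Set.forall_mem_range.2 fun n => by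
      rw [← FunLike.coe_pow_eq_iterate]
      exact (T ^ n).le_of_opNorm_le (hT n) x⟩
  have h := (tendsto_birkhoffAverage_apply_sub_birkhoffAverage 𝕜 (g := id) horbit).neg
  simp only [← birkhoffAverage_apply, ← map_sub, neg_zero] at h
  simpa using h

theorem tendsto_birkhoffAverage_of_mem_closure_range (hT : ∀ n : ℕ, ‖T ^ n‖ ≤ C) {z : X}
    (hz : z ∈ (LinearMap.range ((1 - T : X →L[𝕜] X) : X →ₗ[𝕜] X)).topologicalClosure) :
    Tendsto (fun n => T.birkhoffAverage n z) atTop (𝓝 0) := by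
  have hequi : Equicontinuous ((↑) ∘ T.birkhoffAverage : ℕ → X → X) :=
    ((NormedSpace.equicontinuous_TFAE T.birkhoffAverage).out 5 1).mp
      (show ∃ C, ∀ n, ‖T.birkhoffAverage n‖ ≤ C from ⟨C, norm_birkhoffAverage_le hT⟩)
  refine closure_minimal ?_ (hequi.isClosed_setOfPred_tendsto continuous_const) hz
  rintro _ ⟨x, rfl⟩
  exact tendsto_birkhoffAverage_apply_one_sub hT x

theorem disjoint_ker_closure_range (hT : ∀ n : ℕ, ‖T ^ n‖ ≤ C) :
    Disjoint (LinearMap.ker ((1 - T : X →L[𝕜] X) : X →ₗ[𝕜] X))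
      (LinearMap.range ((1 - T : X →L[𝕜] X) : X →ₗ[𝕜] X)).topologicalClosure := by
  rw [Submodule.disjoint_def]
  intro z hker hz
  have hfix : IsFixedPt T z := (sub_eq_zero.1 (by simpa using hker)).symm
  have hconst : Tendsto (fun n => T.birkhoffAverage n z) atTop (𝓝 z) := by
    simpa only [birkhoffAverage_apply, id_eq] using hfix.tendsto_birkhoffAverage 𝕜 id
  exact tendsto_nhds_unique hconst (tendsto_birkhoffAverage_of_mem_closure_range hT hz)

theorem isFixedPt_of_tendsto_birkhoffAverage (hT : ∀ n : ℕ, ‖T ^ n‖ ≤ C) {U : Filter ℕ}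
    [U.NeBot] (hU : U ≤ atTop) {x y : X}
    (hy : Tendsto (fun n => toWeakSpace 𝕜 X (T.birkhoffAverage n x)) U (𝓝 (toWeakSpace 𝕜 X y))) :
    IsFixedPt T y := by
  have hcomm : ∀ n, T (T.birkhoffAverage n x) =
      T.birkhoffAverage n x - T.birkhoffAverage n ((1 - T) x) := fun n => by
    simpa using congr($((commute_birkhoffAverage n).eq) x)
  have hdefect :
      Tendsto (fun n => toWeakSpace 𝕜 X (T.birkhoffAverage n ((1 - T) x))) U (𝓝 0) :=
    ((toWeakSpaceCLM 𝕜 X).continuous.tendsto' 0 0 (map_zero _)).comp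
      ((tendsto_birkhoffAverage_apply_one_sub hT x).mono_left hU)
  have hlim := hy.sub hdefect
  rw [sub_zero] at hlim
  refine (toWeakSpace 𝕜 X).injective <|
    tendsto_nhds_unique (((WeakSpace.map T).continuous.tendsto _).comp hy) ?_
  convert hlim using 2 with n
  exact congrArg (toWeakSpace 𝕜 X) (hcomm n) |>.trans (map_sub _ _ _)

theorem sub_mem_closure_range_of_tendsto_birkhoffAverage {U : Filter ℕ} [U.NeBot]
    (hU : U ≤ atTop) {x y : X}
    (hy : Tendsto (fun n => toWeakSpace 𝕜 X (T.birkhoffAverage n x)) U (𝓝 (toWeakSpace 𝕜 X y))) :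
    x - y ∈ (LinearMap.range ((1 - T : X →L[𝕜] X) : X →ₗ[𝕜] X)).topologicalClosure := by
  set R := LinearMap.range ((1 - T : X →L[𝕜] X) : X →ₗ[𝕜] X)
  have hlim : Tendsto (fun n => toWeakSpace 𝕜 X (x - T.birkhoffAverage n x)) U
      (𝓝 (toWeakSpace 𝕜 X (x - y))) := by
    simpa only [map_sub] using tendsto_const_nhds.sub hy
  have hmem : ∀ᶠ n in U, toWeakSpace 𝕜 X (x - T.birkhoffAverage n x) ∈
      toWeakSpace 𝕜 X '' R.topologicalClosure :=
    ((eventually_ne_atTop 0).filter_mono hU).mono fun n hn => Set.mem_image_of_mem _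
      (Submodule.le_topologicalClosure _ (sub_birkhoffAverage_mem_range hn x))
  have hM := Submodule.isClosed_image_toWeakSpace R.isClosed_topologicalClosure
  exact (toWeakSpace 𝕜 X).injective.mem_set_image.1 (hM.mem_of_tendsto hlim hmem)

theorem exists_isFixedPt_sub_mem_closure_range
    (hrefl : Surjective (NormedSpace.inclusionInDoubleDual 𝕜 X)) (hT : ∀ n : ℕ, ‖T ^ n‖ ≤ C)
    (x : X) : ∃ y, IsFixedPt T y ∧
      x - y ∈ (LinearMap.range ((1 - T : X →L[𝕜] X) : X →ₗ[𝕜] X)).topologicalClosure := by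
  have hbdd : IsBounded (Set.range fun n => T.birkhoffAverage n x) :=
    isBounded_iff_forall_norm_le.2 ⟨C * ‖x‖, Set.forall_mem_range.2 fun n =>
      (T.birkhoffAverage n).le_of_opNorm_le (norm_birkhoffAverage_le hT n) x⟩
  obtain ⟨y, hy⟩ := NormedSpace.exists_tendsto_toWeakSpace hrefl (Ultrafilter.of atTop) hbdd
  exact ⟨y, isFixedPt_of_tendsto_birkhoffAverage hT (Ultrafilter.of_le _) hy,
    sub_mem_closure_range_of_tendsto_birkhoffAverage (Ultrafilter.of_le _) hy⟩

end ContinuousLinearMap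

end

theorem stmt_1_general {X : Type*} [NormedAddCommGroup X] [NormedSpace ℂ X]
    (hrefl : Function.Surjective (NormedSpace.inclusionInDoubleDual ℂ X))
    (T : X →L[ℂ] X) (C : ℝ) (hT : ∀ n : ℕ, ‖T ^ n‖ ≤ C) :
    IsCompl (LinearMap.ker ((1 - T : X →L[ℂ] X) : X →ₗ[ℂ] X))
      ((LinearMap.range ((1 - T : X →L[ℂ] X) : X →ₗ[ℂ] X)).topologicalClosure) := by
  refine ⟨T.disjoint_ker_closure_range hT, Submodule.codisjoint_iff_exists_add_eq.2 fun x => ?_⟩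
  obtain ⟨y, hy, hxy⟩ := T.exists_isFixedPt_sub_mem_closure_range hrefl hT x
  exact ⟨y, x - y, by simpa using sub_eq_zero.2 hy.symm, hxy, add_sub_cancel y x⟩

/-- Mean ergodic decomposition: if `X` is a reflexive Banach space and
`T` is power bounded, then `X = Ker(I - T) ⊕ closure(Ran(I - T))`. -/
theorem stmt_1 {X : Type*} [NormedAddCommGroup X] [NormedSpace ℂ X] [CompleteSpace X]
    (hrefl : Function.Surjective (NormedSpace.inclusionInDoubleDual ℂ X))
    (T : X →L[ℂ] X) (C : ℝ) (hT : ∀ n : ℕ, ‖T ^ n‖ ≤ C) :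
    IsCompl (LinearMap.ker ((1 - T : X →L[ℂ] X) : X →ₗ[ℂ] X))
      ((LinearMap.range ((1 - T : X →L[ℂ] X) : X →ₗ[ℂ] X)).topologicalClosure) :=
  stmt_1_general hrefl T C hT
end

section
/- Let (ε_k)_{k≥1} be an i.i.d. Rademacher sequence (symmetric ±1 valued random variables) on a probability space, X a Banach space, x₁, ..., x_N ∈ X, a₁, ..., a_N ∈ ℝ, and 1 ≤ p < ∞. Then E‖∑_{n=1}^N a_n ε_n x_n‖^p ≤ (max_{1≤n≤N} |a_n|)^p · E‖∑_{n=1}^N ε_n x_n‖^p. -/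
/-!
Put `F b = 𝔼 ‖∑ bₙ εₙ xₙ‖ ^ p` for `b : ℝ^N`. Each `b ↦ ‖∑ bₙ εₙ(ω) xₙ‖ ^ p` is convex, hence so
is `F`. Changing the sign of one coordinate `bᵢ` does not change `F`, because replacing `εᵢ` by
`-εᵢ` preserves the joint law of the independent symmetric signs. On the segment from
`update b i (-M)` to `update b i M`, the convex function `F` is bounded by its (equal) values at
the endpoints; raising the coordinates of `a` to `M` one at a time therefore never decreases `F`,
and `F (M, …, M) = M ^ p 𝔼 ‖∑ εₙ xₙ‖ ^ p`.
-/

open MeasureTheory ProbabilityTheory Set Function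
open scoped ENNReal

section Convexity

theorem convexOn_norm_rpow {X : Type*} [SeminormedAddCommGroup X] [NormedSpace ℝ X] {p : ℝ}
    (hp : 1 ≤ p) : ConvexOn ℝ univ fun v : X => ‖v‖ ^ p := by
  refine ⟨convex_univ, fun v _ w _ s t hs ht hst => ?_⟩
  calc ‖s • v + t • w‖ ^ p ≤ (s * ‖v‖ + t * ‖w‖) ^ p := by
        gcongr
        calc ‖s • v + t • w‖ ≤ ‖s • v‖ + ‖t • w‖ := norm_add_le _ _
          _ = s * ‖v‖ + t * ‖w‖ := by rw [norm_smul_of_nonneg hs, norm_smul_of_nonneg ht]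
    _ ≤ s * ‖v‖ ^ p + t * ‖w‖ ^ p :=
        (convexOn_rpow hp).2 (norm_nonneg v) (norm_nonneg w) hs ht hst

theorem convexOn_integral {E Ω : Type*} [AddCommGroup E] [Module ℝ E] [MeasurableSpace Ω]
    {μ : Measure Ω} {s : Set E} {φ : E → Ω → ℝ} (hs : Convex ℝ s)
    (hφ : ∀ ω, ConvexOn ℝ s fun b => φ b ω) (hint : ∀ b ∈ s, Integrable (φ b) μ) :
    ConvexOn ℝ s fun b => ∫ ω, φ b ω ∂μ := by
  refine ⟨hs, fun b hb c hc t u ht hu htu => ?_⟩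
  have hcomb := ((hint b hb).const_mul t).add ((hint c hc).const_mul u)
  calc ∫ ω, φ (t • b + u • c) ω ∂μ ≤ ∫ ω, (t * φ b ω + u * φ c ω) ∂μ :=
        integral_mono (hint _ (hs hb hc ht hu htu)) hcomb fun ω => (hφ ω).2 hb hc ht hu htu
    _ = t * ∫ ω, φ b ω ∂μ + u * ∫ ω, φ c ω ∂μ := by
        rw [integral_add ((hint b hb).const_mul t) ((hint c hc).const_mul u), integral_const_mul,
          integral_const_mul]

variable {ι : Type*} [DecidableEq ι] {F : (ι → ℝ) → ℝ}

theorem ConvexOn.apply_update_le (hF : ConvexOn ℝ univ F)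
    (hsymm : ∀ b i, F (update b i (-b i)) = F b) (b : ι → ℝ) (i : ι) {t M : ℝ} (ht : |t| ≤ M) :
    F (update b i t) ≤ F (update b i M) := by
  have hmem : update b i t ∈ segment ℝ (update b i (-M)) (update b i M) := by
    rw [← Pi.image_update_segment, segment_eq_Icc (by linarith [abs_nonneg t])]
    exact mem_image_of_mem _ (abs_le.mp ht)
  have hflip : F (update b i (-M)) = F (update b i M) := by
    simpa using hsymm (update b i M) i
  simpa [hflip] using hF.le_max_of_mem_segment (mem_univ _) (mem_univ _) hmem

theorem ConvexOn.le_apply_const_of_abs_le [Fintype ι] (hF : ConvexOn ℝ univ F)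
    (hsymm : ∀ b i, F (update b i (-b i)) = F b) {M : ℝ} {b : ι → ℝ} (hb : ∀ i, |b i| ≤ M) :
    F b ≤ F fun _ => M := by
  suffices ∀ s : Finset ι, F b ≤ F fun i => if i ∈ s then M else b i by
    simpa using this Finset.univ
  intro s
  induction s using Finset.induction_on with
  | empty => simp
  | insert i s hi ih =>
    set c : ι → ℝ := fun j => if j ∈ s then M else b j
    have hc : update c i (b i) = c := by simp [c, hi]
    have hins : (fun j => if j ∈ insert i s then M else b j) = update c i M := by
      ext j
      by_cases hj : j = i <;> simp [c, hj]
    rw [hins]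
    calc F b ≤ F c := ih
      _ = F (update c i (b i)) := by rw [hc]
      _ ≤ F (update c i M) := hF.apply_update_le hsymm c i (hb i)

end Convexity

section Rademacher

variable {Ω : Type*} [MeasurableSpace Ω] {μ : Measure Ω}

def IsRademacher (μ : Measure Ω) (f : Ω → ℝ) : Prop :=
  μ {ω | f ω = 1} = 1 / 2 ∧ μ {ω | f ω = -1} = 1 / 2

namespace IsRademacher

variable [IsProbabilityMeasure μ] {f : Ω → ℝ}

theorem ae_eq_one_or_eq_neg_one (hf : Measurable f) (h : IsRademacher μ f) :
    ∀ᵐ ω ∂μ, f ω = 1 ∨ f ω = -1 := by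
  have hdisj : Disjoint {ω | f ω = 1} {ω | f ω = -1} :=
    disjoint_left.2 fun ω (h₁ : f ω = 1) (h₂ : f ω = -1) => by linarith
  have hone : MeasurableSet {ω | f ω = 1} := hf (measurableSet_singleton _)
  have hneg : MeasurableSet {ω | f ω = -1} := hf (measurableSet_singleton _)
  rw [ae_iff_measure_eq (by rw [ofPred_or]; exact (hone.union hneg).nullMeasurableSet),
    ofPred_or, measure_union hdisj hneg, h.1, h.2, ENNReal.add_halves, measure_univ]

theorem map_eq (hf : Measurable f) (h : IsRademacher μ f) :
    μ.map f = (1 / 2 : ℝ≥0∞) • Measure.dirac 1 + (1 / 2 : ℝ≥0∞) • Measure.dirac (-1) := by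
  rw [(Measure.ae_eq_or_eq_iff_map_eq_dirac_add_dirac hf.aemeasurable (by norm_num)).1
    (h.ae_eq_one_or_eq_neg_one hf)]
  exact congrArg₂ (· • Measure.dirac 1 + · • Measure.dirac (-1)) h.1 h.2

theorem map_neg_map (hf : Measurable f) (h : IsRademacher μ f) :
    (μ.map f).map Neg.neg = μ.map f := by
  rw [h.map_eq hf, Measure.map_add _ _ measurable_neg, Measure.map_smul, Measure.map_smul,
    Measure.map_dirac' measurable_neg, Measure.map_dirac' measurable_neg, neg_neg, add_comm]

theorem ae_abs_le_one (hf : Measurable f) (h : IsRademacher μ f) : ∀ᵐ ω ∂μ, |f ω| ≤ 1 :=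
  (h.ae_eq_one_or_eq_neg_one hf).mono fun ω hω => by rcases hω with hω | hω <;> simp [hω]

end IsRademacher

theorem MeasureTheory.Measure.pi_map_update_neg {ι : Type*} [Fintype ι] [DecidableEq ι]
    {ν : ι → Measure ℝ} [∀ i, IsFiniteMeasure (ν i)] {i : ι} (hν : (ν i).map Neg.neg = ν i) :
    (Measure.pi ν).map (fun y => update y i (-y i)) = Measure.pi ν := by
  set g : ι → ℝ → ℝ := update (fun _ => id) i Neg.neg
  have hg : ∀ j, Measurable (g j) := by
    intro j
    by_cases hj : j = i
    · subst hj; simpa [g] using measurable_neg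
    · simpa [g, hj] using measurable_id
  have hflip : (fun y : ι → ℝ => update y i (-y i)) = fun y j => g j (y j) := by
    ext y j
    by_cases hj : j = i
    · subst hj; simp [g]
    · simp [g, hj]
  rw [hflip, Measure.pi_map_pi fun j => (hg j).aemeasurable]
  congr 1
  ext1 j
  by_cases hj : j = i
  · subst hj; simpa [g] using hν
  · simp [g, hj]

theorem ProbabilityTheory.iIndepFun.identDistrib_update_neg {ι : Type*} [Fintype ι]
    [DecidableEq ι] [IsProbabilityMeasure μ] {ε : ι → Ω → ℝ} (hmeas : ∀ n, Measurable (ε n))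
    (hindep : iIndepFun ε μ) {i : ι} (hi : (μ.map (ε i)).map Neg.neg = μ.map (ε i)) :
    IdentDistrib (fun ω => update (fun n => ε n ω) i (-ε i ω)) (fun ω n => ε n ω) μ μ := by
  have hE : Measurable fun ω n => ε n ω := measurable_pi_lambda _ hmeas
  have hflip : Measurable fun y : ι → ℝ => update y i (-y i) := by fun_prop
  refine ⟨(hflip.comp hE).aemeasurable, hE.aemeasurable, ?_⟩
  change μ.map ((fun y => update y i (-y i)) ∘ fun ω n => ε n ω) = _
  rw [← Measure.map_map hflip hE, hindep.map_fun_eq_pi_map fun n => (hmeas n).aemeasurable,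
    Measure.pi_map_update_neg (ν := fun n => μ.map (ε n)) hi]

theorem update_neg_mul {ι : Type*} [DecidableEq ι] (b y : ι → ℝ) (i : ι) :
    update b i (-b i) * y = b * update y i (-y i) := by
  ext n
  by_cases hn : n = i
  · subst hn; simp
  · simp [hn]

theorem integral_update_neg_mul {ι : Type*} [Countable ι] [DecidableEq ι] {Y : Ω → ι → ℝ} {i : ι}
    (hY : IdentDistrib (fun ω => update (Y ω) i (-Y ω i)) Y μ μ) {G : (ι → ℝ) → ℝ}
    (hG : Continuous G) (b : ι → ℝ) :
    ∫ ω, G (update b i (-b i) * Y ω) ∂μ = ∫ ω, G (b * Y ω) ∂μ := by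
  simp_rw [update_neg_mul]
  exact (hY.comp (hG.comp (continuous_const.mul continuous_id)).measurable).integral_eq

variable {ι X : Type*} [Fintype ι] [NormedAddCommGroup X] [NormedSpace ℝ X]

theorem continuous_rpow_norm_sum_smul (x : ι → X) {p : ℝ} (hp : 0 ≤ p) :
    Continuous fun z : ι → ℝ => ‖∑ n, z n • x n‖ ^ p := by
  fun_prop (disch := exact hp)

theorem integrable_rpow_norm_sum_mul_smul [IsFiniteMeasure μ] {ε : ι → Ω → ℝ}
    (hmeas : ∀ n, Measurable (ε n)) (hbd : ∀ n, ∀ᵐ ω ∂μ, |ε n ω| ≤ 1) (x : ι → X) (b : ι → ℝ)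
    {p : ℝ} (hp : 0 ≤ p) : Integrable (fun ω => ‖∑ n, (b n * ε n ω) • x n‖ ^ p) μ := by
  have hmeas' : Measurable fun ω => ‖∑ n, (b * fun n => ε n ω) n • x n‖ ^ p :=
    (continuous_rpow_norm_sum_smul x hp).measurable.comp
      (measurable_const.mul (measurable_pi_lambda _ hmeas))
  refine Integrable.of_bound hmeas'.aestronglyMeasurable ((∑ n, |b n| * ‖x n‖) ^ p) ?_
  filter_upwards [ae_all_iff.2 hbd] with ω hω
  rw [Real.norm_of_nonneg (by positivity)]
  gcongr
  refine (norm_sum_le _ _).trans (Finset.sum_le_sum fun n _ => ?_)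
  rw [norm_smul, Real.norm_eq_abs, abs_mul]
  gcongr
  exact mul_le_of_le_one_right (abs_nonneg _) (hω n)

theorem convexOn_rpow_norm_sum_mul_smul (x : ι → X) (e : ι → ℝ) {p : ℝ} (hp : 1 ≤ p) :
    ConvexOn ℝ univ fun b : ι → ℝ => ‖∑ n, (b n * e n) • x n‖ ^ p :=
  (convexOn_norm_rpow hp).comp_linearMap
    ((Fintype.linearCombination ℝ x).comp (LinearMap.mulRight ℝ e))

theorem rpow_norm_sum_const_mul_smul (x : ι → X) (e : ι → ℝ) {M : ℝ} (hM : 0 ≤ M) (p : ℝ) :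
    ‖∑ n, (M * e n) • x n‖ ^ p = M ^ p * ‖∑ n, e n • x n‖ ^ p := by
  simp only [mul_smul, ← Finset.smul_sum, norm_smul, Real.norm_of_nonneg hM,
    Real.mul_rpow hM (norm_nonneg _)]

end Rademacher

/-- Kahane contraction principle for Rademacher sums:
`E‖∑ aₙ εₙ xₙ‖^p ≤ (max |aₙ|)^p · E‖∑ εₙ xₙ‖^p`. -/
theorem stmt_4 {Ω : Type*} [MeasurableSpace Ω] (μ : Measure Ω) [IsProbabilityMeasure μ]
    {X : Type*} [NormedAddCommGroup X] [NormedSpace ℝ X]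
    {N : ℕ} (ε : Fin N → Ω → ℝ) (hmeas : ∀ n, Measurable (ε n))
    (hindep : iIndepFun ε μ)
    (hdist : ∀ n, μ {ω | ε n ω = 1} = 1/2 ∧ μ {ω | ε n ω = -1} = 1/2)
    (x : Fin N → X) (a : Fin N → ℝ) (p : ℝ) (hp : 1 ≤ p)
    (M : ℝ) (hM : 0 ≤ M) (hMa : ∀ n, |a n| ≤ M) :
    ∫ ω, ‖∑ n, (a n * ε n ω) • x n‖ ^ p ∂μ ≤
      M ^ p * ∫ ω, ‖∑ n, ε n ω • x n‖ ^ p ∂μ := by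
  have hp0 : 0 ≤ p := zero_le_one.trans hp
  have hrad : ∀ n, IsRademacher μ (ε n) := hdist
  set F : (Fin N → ℝ) → ℝ := fun b => ∫ ω, ‖∑ n, (b n * ε n ω) • x n‖ ^ p ∂μ
  have hconvex : ConvexOn ℝ univ F :=
    convexOn_integral convex_univ (fun ω => convexOn_rpow_norm_sum_mul_smul x _ hp) fun b _ =>
      integrable_rpow_norm_sum_mul_smul hmeas (fun n => (hrad n).ae_abs_le_one (hmeas n)) x b hp0
  have hsymm : ∀ b i, F (update b i (-b i)) = F b := fun b i =>
    integral_update_neg_mul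
      (hindep.identDistrib_update_neg hmeas ((hrad i).map_neg_map (hmeas i)))
      (continuous_rpow_norm_sum_smul x hp0) b
  calc F a ≤ F fun _ => M := hconvex.le_apply_const_of_abs_le hsymm hMa
    _ = M ^ p * ∫ ω, ‖∑ n, ε n ω • x n‖ ^ p ∂μ := by
      simp only [F, rpow_norm_sum_const_mul_smul x _ hM, integral_const_mul]
end

section
/- Let θ ∈ (0, π/2), let h be a bounded holomorphic function on the sector Σ_θ = {z ∈ ℂ \ {0} : |Arg z| < θ} satisfying |h(z)| ≤ C |z|^s / (1 + |z|^{2s}) for some C, s > 0, and let ρ ∈ (0,1). Define h̃(z) = h((1-ρ) + ρz) − h(1-ρ)/(1+z) on Σ_θ. Then h̃ ∈ H^∞₀(Σ_θ), i.e., h̃ is bounded holomorphic on Σ_θ and there exist C', s' > 0 with |h̃(z)| ≤ C' |z|^{s'} / (1 + |z|^{2s'}) for all z ∈ Σ_θ, and moreover ‖h̃‖_{∞,Σ_θ} ≤ 2‖h‖_{∞,Σ_θ}. -/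
/-!
For `θ ≤ π`, `Σ_θ = {z : cos θ ‖z‖ < Re z}`; for `θ ≤ π / 2` this is an open convex cone, so
`z ↦ (1 - ρ) + ρ z` maps it into itself, and `‖1 + z‖ ≥ max 1 ‖z‖` on it.
Near `0`, write `h̃ z = (h ((1 - ρ) + ρ z) - h (1 - ρ)) + h (1 - ρ) z / (1 + z)`: the Schwarz lemma
on a disc around `1 - ρ` inside `Σ_θ` makes the first term `O(‖z‖)`.
Near `∞`, `‖(1 - ρ) + ρ z‖ ≥ ρ cos θ ‖z‖`, so the decay of `h` gives `h̃ z = O(‖z‖ ^ (-min s 1))`.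
Both estimates together give the `H^∞₀` bound with exponent `min s 1`.
-/

/-- The open sector `Σ_θ = {z ≠ 0 : |Arg z| < θ}`. -/
def Sector (θ : ℝ) : Set ℂ := {z : ℂ | z ≠ 0 ∧ |Complex.arg z| < θ}

open Set Metric Real

theorem rpow_two_mul_eq_sq {x : ℝ} (hx : 0 ≤ x) (s : ℝ) : x ^ (2 * s) = (x ^ s) ^ 2 := by
  rw [mul_comm]
  exact_mod_cast Real.rpow_mul_natCast hx s 2

theorem mul_rpow_div_one_add_rpow_le {C x s : ℝ} (hC : 0 ≤ C) (hx : 0 ≤ x) :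
    C * x ^ s / (1 + x ^ (2 * s)) ≤ C := by
  rw [rpow_two_mul_eq_sq hx, div_le_iff₀ (by positivity)]
  nlinarith [sq_nonneg (x ^ s - 1), Real.rpow_nonneg hx s]

theorem mul_rpow_div_one_add_rpow_le_div {C x s : ℝ} (hC : 0 ≤ C) (hx : 0 < x) :
    C * x ^ s / (1 + x ^ (2 * s)) ≤ C / x ^ s := by
  have hy := Real.rpow_pos_of_pos hx s
  rw [rpow_two_mul_eq_sq hx.le, div_le_div_iff₀ (by positivity) hy]
  nlinarith

theorem norm_le_decay_of_le_mul_norm_of_le_div_rpow {E F : Type*} [SeminormedAddCommGroup E]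
    [SeminormedAddCommGroup F] {S : Set E} {f : E → F} {A B a : ℝ} (hA : 0 ≤ A) (hB : 0 ≤ B)
    (ha : a ∈ Icc 0 1) (hsmall : ∀ z ∈ S, ‖f z‖ ≤ A * ‖z‖)
    (hlarge : ∀ z ∈ S, 1 ≤ ‖z‖ → ‖f z‖ ≤ B / ‖z‖ ^ a) :
    ∀ z ∈ S, ‖f z‖ ≤ 2 * max A B * ‖z‖ ^ a / (1 + ‖z‖ ^ (2 * a)) := by
  intro z hz
  have hx : 0 ≤ ‖z‖ := norm_nonneg z
  rw [rpow_two_mul_eq_sq hx]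
  rcases le_total ‖z‖ 1 with hx1 | hx1
  · have hy1 : ‖z‖ ^ a ≤ 1 := Real.rpow_le_one hx hx1 ha.1
    calc ‖f z‖ ≤ A * ‖z‖ := hsmall z hz
      _ ≤ max A B * ‖z‖ ^ a := by
          gcongr
          · exact le_max_left A B
          · simpa using Real.rpow_le_rpow_of_exponent_ge' hx hx1 ha.1 ha.2
      _ ≤ 2 * max A B * ‖z‖ ^ a / (1 + (‖z‖ ^ a) ^ 2) := by
          rw [le_div_iff₀ (by positivity)]
          have hK : 0 ≤ max A B * ‖z‖ ^ a := by positivity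
          have hy2 : (‖z‖ ^ a) ^ 2 ≤ 1 := pow_le_one₀ (Real.rpow_nonneg hx a) hy1
          nlinarith [mul_le_mul_of_nonneg_left hy2 hK]
  · have hy1 : 1 ≤ ‖z‖ ^ a := Real.one_le_rpow hx1 ha.1
    calc ‖f z‖ ≤ B / ‖z‖ ^ a := hlarge z hz hx1
      _ ≤ max A B / ‖z‖ ^ a := by gcongr; exact le_max_right A B
      _ ≤ 2 * max A B * ‖z‖ ^ a / (1 + (‖z‖ ^ a) ^ 2) := by
          rw [div_le_div_iff₀ (by positivity) (by positivity)]
          have : 0 ≤ max A B := hB.trans (le_max_right A B)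
          nlinarith [mul_nonneg this (sub_nonneg.mpr hy1)]

theorem norm_sub_le_of_norm_le_of_ball_subset {E F : Type*} [NormedAddCommGroup E]
    [NormedSpace ℂ E] [NormedAddCommGroup F] [NormedSpace ℂ F] {U : Set E} {f : E → F} {M R : ℝ}
    {c w : E} (hf : DifferentiableOn ℂ f U) (hM : ∀ v ∈ U, ‖f v‖ ≤ M) (hball : ball c R ⊆ U)
    (hw : w ∈ ball c R) : ‖f w - f c‖ ≤ 2 * M / R * ‖w - c‖ := by
  have hc : c ∈ U := hball (mem_ball_self (pos_of_mem_ball hw))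
  have hmaps : MapsTo f (ball c R) (closedBall (f c) (2 * M)) := fun v hv => by
    rw [mem_closedBall, dist_eq_norm]
    linarith [norm_sub_le (f v) (f c), hM v (hball hv), hM c hc]
  simpa only [dist_eq_norm] using
    Complex.dist_le_div_mul_dist_of_mapsTo_ball (hf.mono hball) hmaps hw

theorem one_le_norm_one_add {z : ℂ} (hz : 0 ≤ z.re) : 1 ≤ ‖1 + z‖ :=
  calc (1 : ℝ) ≤ (1 + z).re := by simp [hz]
    _ ≤ ‖1 + z‖ := Complex.re_le_norm _

theorem one_add_ne_zero_of_re_nonneg {z : ℂ} (hz : 0 ≤ z.re) : 1 + z ≠ 0 :=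
  norm_pos_iff.mp (one_pos.trans_le (one_le_norm_one_add hz))

theorem norm_le_norm_one_add {z : ℂ} (hz : 0 ≤ z.re) : ‖z‖ ≤ ‖1 + z‖ := by
  rw [← sq_le_sq₀ (norm_nonneg _) (norm_nonneg _), Complex.sq_norm, Complex.sq_norm,
    Complex.normSq_apply, Complex.normSq_apply]
  simp only [Complex.add_re, Complex.add_im, Complex.one_re, Complex.one_im]
  nlinarith

theorem norm_div_one_add_le {z : ℂ} (hz : 0 ≤ z.re) (a : ℂ) : ‖a / (1 + z)‖ ≤ ‖a‖ := by
  rw [norm_div]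
  exact div_le_self (norm_nonneg a) (one_le_norm_one_add hz)

section Sector

variable {θ : ℝ}

theorem mem_sector_iff (hθ : θ ∈ Icc 0 π) {z : ℂ} : z ∈ Sector θ ↔ cos θ * ‖z‖ < z.re := by
  rcases eq_or_ne z 0 with rfl | hz
  · simp [Sector]
  have harg : |Complex.arg z| ∈ Icc 0 π := ⟨abs_nonneg _, Complex.abs_arg_le_pi z⟩
  change z ≠ 0 ∧ |Complex.arg z| < θ ↔ _
  rw [and_iff_right hz, ← strictAntiOn_cos.lt_iff_gt hθ harg, cos_abs, Complex.cos_arg hz,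
    lt_div_iff₀ (norm_pos_iff.mpr hz)]

theorem isOpen_sector (hθ : θ ∈ Icc 0 π) : IsOpen (Sector θ) := by
  rw [show Sector θ = {z : ℂ | cos θ * ‖z‖ < z.re} from Set.ext fun z => mem_sector_iff hθ]
  exact isOpen_lt (continuous_const.mul continuous_norm) Complex.continuous_re

theorem convex_sector (hθ : θ ∈ Icc 0 (π / 2)) : Convex ℝ (Sector θ) := by
  have hcos : 0 ≤ cos θ := cos_nonneg_of_mem_Icc ⟨by linarith [hθ.1, pi_pos], hθ.2⟩
  have hconv : ConvexOn ℝ univ (fun z : ℂ => cos θ * ‖z‖ - z.re) :=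
    ((convexOn_norm convex_univ).smul hcos).sub (Complex.reLm.concaveOn convex_univ)
  rw [show Sector θ = {z ∈ univ | cos θ * ‖z‖ - z.re < 0} from Set.ext fun z => by
    simp [mem_sector_iff (Icc_subset_Icc_right (half_le_self pi_pos.le) hθ)]]
  exact hconv.convex_lt 0

theorem re_pos_of_mem_sector (hθ : θ ∈ Icc 0 (π / 2)) {z : ℂ} (hz : z ∈ Sector θ) : 0 < z.re := by
  have hcos : 0 ≤ cos θ := cos_nonneg_of_mem_Icc ⟨by linarith [hθ.1, pi_pos], hθ.2⟩
  have := (mem_sector_iff (Icc_subset_Icc_right (half_le_self pi_pos.le) hθ)).mp hz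
  nlinarith [norm_nonneg z]

theorem ofReal_mem_sector (hθ : 0 < θ) {r : ℝ} (hr : 0 < r) : (r : ℂ) ∈ Sector θ :=
  ⟨Complex.ofReal_ne_zero.mpr hr.ne', by simpa [Complex.arg_ofReal_of_nonneg hr.le] using hθ⟩

theorem ofReal_one_sub_add_mul_mem_sector (hθ : θ ∈ Ioc 0 (π / 2)) {ρ : ℝ} (hρ : ρ ∈ Icc 0 1)
    {z : ℂ} (hz : z ∈ Sector θ) : ((1 - ρ : ℝ) : ℂ) + ρ * z ∈ Sector θ := by
  have := convex_sector ⟨hθ.1.le, hθ.2⟩ (ofReal_mem_sector hθ.1 one_pos) hz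
    (sub_nonneg.mpr hρ.2) hρ.1 (by ring)
  simpa [Complex.real_smul] using this

end Sector

/-- The function `h̃` of the statement. -/
noncomputable def tilde (h : ℂ → ℂ) (ρ : ℝ) (z : ℂ) : ℂ :=
  h (((1 - ρ : ℝ) : ℂ) + (ρ : ℂ) * z) - h ((1 - ρ : ℝ) : ℂ) / (1 + z)

section Tilde

variable {θ ρ : ℝ} {h : ℂ → ℂ}

theorem differentiableOn_tilde (hθ : θ ∈ Ioc 0 (π / 2)) (hρ : ρ ∈ Icc 0 1)
    (hh : DifferentiableOn ℂ h (Sector θ)) : DifferentiableOn ℂ (tilde h ρ) (Sector θ) := by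
  refine (hh.comp (by fun_prop) fun z hz => ofReal_one_sub_add_mul_mem_sector hθ hρ hz).sub ?_
  refine (differentiableOn_const _).div (by fun_prop) fun z hz => ?_
  exact one_add_ne_zero_of_re_nonneg (re_pos_of_mem_sector ⟨hθ.1.le, hθ.2⟩ hz).le

theorem norm_tilde_le_two_mul (hθ : θ ∈ Ioc 0 (π / 2)) (hρ : ρ ∈ Ico 0 1) {M : ℝ}
    (hM : ∀ z ∈ Sector θ, ‖h z‖ ≤ M) {z : ℂ} (hz : z ∈ Sector θ) : ‖tilde h ρ z‖ ≤ 2 * M := by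
  have ht : ((1 - ρ : ℝ) : ℂ) ∈ Sector θ := ofReal_mem_sector hθ.1 (sub_pos.mpr hρ.2)
  have hre := (re_pos_of_mem_sector ⟨hθ.1.le, hθ.2⟩ hz).le
  calc ‖tilde h ρ z‖
      ≤ ‖h (((1 - ρ : ℝ) : ℂ) + ρ * z)‖ + ‖h ((1 - ρ : ℝ) : ℂ) / (1 + z)‖ := norm_sub_le _ _
    _ ≤ M + M :=
        add_le_add (hM _ (ofReal_one_sub_add_mul_mem_sector hθ (Ico_subset_Icc_self hρ) hz))
          ((norm_div_one_add_le hre _).trans (hM _ ht))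
    _ = 2 * M := by ring

theorem exists_norm_tilde_le_mul_norm (hθ : θ ∈ Ioc 0 (π / 2)) (hρ : ρ ∈ Ico 0 1)
    (hh : DifferentiableOn ℂ h (Sector θ)) {M : ℝ} (hM : ∀ z ∈ Sector θ, ‖h z‖ ≤ M) :
    ∃ A, 0 ≤ A ∧ ∀ z ∈ Sector θ, ‖tilde h ρ z‖ ≤ A * ‖z‖ := by
  set t : ℂ := ((1 - ρ : ℝ) : ℂ)
  have ht : t ∈ Sector θ := ofReal_mem_sector hθ.1 (sub_pos.mpr hρ.2)
  obtain ⟨δ, hδ, hball⟩ :=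
    Metric.isOpen_iff.mp (isOpen_sector ⟨hθ.1.le, hθ.2.trans (half_le_self pi_pos.le)⟩) t ht
  have hM0 : 0 ≤ M := (norm_nonneg _).trans (hM t ht)
  have hρ0 := hρ.1
  refine ⟨2 * M * ρ / δ + M, by positivity, fun z hz => ?_⟩
  have hre := (re_pos_of_mem_sector ⟨hθ.1.le, hθ.2⟩ hz).le
  rcases lt_or_ge (ρ * ‖z‖) δ with hnear | hfar
  · have hw : t + ρ * z ∈ ball t δ := by
      rwa [mem_ball, dist_eq_norm, add_sub_cancel_left, norm_mul, Complex.norm_real,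
        Real.norm_of_nonneg hρ0]
    have hsplit : tilde h ρ z = (h (t + ρ * z) - h t) + h t * z / (1 + z) := by
      have := one_add_ne_zero_of_re_nonneg hre
      simp only [tilde, t]
      field_simp
      ring
    calc ‖tilde h ρ z‖ ≤ ‖h (t + ρ * z) - h t‖ + ‖h t * z / (1 + z)‖ := hsplit ▸ norm_add_le _ _
      _ ≤ 2 * M / δ * ‖t + ρ * z - t‖ + ‖h t‖ * ‖z‖ := by
          gcongr
          · exact norm_sub_le_of_norm_le_of_ball_subset hh hM hball hw
          · exact (norm_div_one_add_le hre _).trans (norm_mul _ _).le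
      _ ≤ 2 * M / δ * (ρ * ‖z‖) + M * ‖z‖ := by
          rw [add_sub_cancel_left, norm_mul, Complex.norm_real, Real.norm_of_nonneg hρ0]
          gcongr
          exact hM t ht
      _ = (2 * M * ρ / δ + M) * ‖z‖ := by ring
  · calc ‖tilde h ρ z‖ ≤ 2 * M := norm_tilde_le_two_mul hθ hρ hM hz
      _ ≤ 2 * M * (ρ * ‖z‖ / δ) := le_mul_of_one_le_right (by positivity) ((one_le_div hδ).mpr hfar)
      _ = 2 * M * ρ / δ * ‖z‖ := by ring
      _ ≤ (2 * M * ρ / δ + M) * ‖z‖ := by rw [add_mul]; exact le_add_of_nonneg_right (by positivity)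

theorem exists_norm_tilde_le_div_rpow (hθ : θ ∈ Ioo 0 (π / 2)) (hρ : ρ ∈ Ioo 0 1) {C s : ℝ}
    (hC : 0 < C) (hs : 0 ≤ s)
    (hdecay : ∀ z ∈ Sector θ, ‖h z‖ ≤ C * ‖z‖ ^ s / (1 + ‖z‖ ^ (2 * s))) :
    ∃ B, 0 < B ∧ ∀ z ∈ Sector θ, 1 ≤ ‖z‖ → ‖tilde h ρ z‖ ≤ B / ‖z‖ ^ min s 1 := by
  have hθ' : θ ∈ Ioc 0 (π / 2) := Ioo_subset_Ioc_self hθ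
  set t : ℂ := ((1 - ρ : ℝ) : ℂ)
  have ht : t ∈ Sector θ := ofReal_mem_sector hθ.1 (sub_pos.mpr hρ.2)
  set c := ρ * cos θ
  have hc : 0 < c := mul_pos hρ.1 (cos_pos_of_mem_Ioo ⟨by linarith [hθ.1, pi_pos], hθ.2⟩)
  refine ⟨C / c ^ s + C, by positivity, fun z hz hz1 => ?_⟩
  have hz0 : 0 < ‖z‖ := one_pos.trans_le hz1
  have hwmem : t + ρ * z ∈ Sector θ :=
    ofReal_one_sub_add_mul_mem_sector hθ' (Ioo_subset_Icc_self hρ) hz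
  have hw : c * ‖z‖ ≤ ‖t + ρ * z‖ :=
    calc c * ‖z‖ = ρ * (cos θ * ‖z‖) := by ring
      _ ≤ ρ * z.re := by
          gcongr
          · exact hρ.1.le
          · exact ((mem_sector_iff ⟨hθ.1.le, hθ.2.le.trans (half_le_self pi_pos.le)⟩).mp hz).le
      _ ≤ (t + ρ * z).re := by
          simp only [t, Complex.add_re, Complex.ofReal_re, Complex.re_ofReal_mul]
          linarith [hρ.2]
      _ ≤ ‖t + ρ * z‖ := Complex.re_le_norm _
  have hfirst : ‖h (t + ρ * z)‖ ≤ C / c ^ s / ‖z‖ ^ min s 1 :=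
    calc ‖h (t + ρ * z)‖ ≤ C / ‖t + ρ * z‖ ^ s := (hdecay _ hwmem).trans
          (mul_rpow_div_one_add_rpow_le_div hC.le (norm_pos_iff.mpr hwmem.1))
      _ ≤ C / (c * ‖z‖) ^ s := by gcongr
      _ = C / c ^ s / ‖z‖ ^ s := by rw [Real.mul_rpow hc.le hz0.le, div_div]
      _ ≤ C / c ^ s / ‖z‖ ^ min s 1 := by
          gcongr
          exact min_le_left s 1
  have hsecond : ‖h t / (1 + z)‖ ≤ C / ‖z‖ ^ min s 1 :=
    calc ‖h t / (1 + z)‖ = ‖h t‖ / ‖1 + z‖ := norm_div _ _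
      _ ≤ C / ‖z‖ := by
          gcongr
          · exact (hdecay t ht).trans (mul_rpow_div_one_add_rpow_le hC.le (norm_nonneg _))
          · exact norm_le_norm_one_add (re_pos_of_mem_sector ⟨hθ.1.le, hθ.2.le⟩ hz).le
      _ ≤ C / ‖z‖ ^ min s 1 := by
          gcongr
          simpa using Real.rpow_le_rpow_of_exponent_le hz1 (min_le_right s 1)
  calc ‖tilde h ρ z‖ ≤ ‖h (t + ρ * z)‖ + ‖h t / (1 + z)‖ := norm_sub_le _ _
    _ ≤ C / c ^ s / ‖z‖ ^ min s 1 + C / ‖z‖ ^ min s 1 := add_le_add hfirst hsecond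
    _ = (C / c ^ s + C) / ‖z‖ ^ min s 1 := by rw [add_div]

end Tilde

/-- if `h ∈ H^∞₀(Σ_θ)` and `ρ ∈ (0,1)`, then
`h̃(z) = h((1-ρ)+ρz) − h(1-ρ)/(1+z)` belongs to `H^∞₀(Σ_θ)`, with
`‖h̃‖_{∞,Σ_θ} ≤ 2 ‖h‖_{∞,Σ_θ}`. -/
theorem stmt_6 (θ : ℝ) (hθ : θ ∈ Set.Ioo 0 (Real.pi / 2))
    (h : ℂ → ℂ) (hhol : DifferentiableOn ℂ h (Sector θ))
    (C s : ℝ) (hC : 0 < C) (hs : 0 < s)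
    (hdecay : ∀ z ∈ Sector θ, ‖h z‖ ≤ C * ‖z‖ ^ s / (1 + ‖z‖ ^ (2 * s)))
    (ρ : ℝ) (hρ : ρ ∈ Set.Ioo (0 : ℝ) 1)
    (htil : ℂ → ℂ)
    (hdef : ∀ z : ℂ, htil z = h (((1 - ρ : ℝ) : ℂ) + (ρ : ℂ) * z)
      - h ((1 - ρ : ℝ) : ℂ) / (1 + z)) :
    (DifferentiableOn ℂ htil (Sector θ) ∧
      ∃ C' s' : ℝ, 0 < C' ∧ 0 < s' ∧
        ∀ z ∈ Sector θ, ‖htil z‖ ≤ C' * ‖z‖ ^ s' / (1 + ‖z‖ ^ (2 * s'))) ∧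
    ∀ M : ℝ, (∀ z ∈ Sector θ, ‖h z‖ ≤ M) → ∀ z ∈ Sector θ, ‖htil z‖ ≤ 2 * M := by
  obtain rfl : htil = tilde h ρ := funext hdef
  have hθ' : θ ∈ Ioc 0 (π / 2) := Ioo_subset_Ioc_self hθ
  have hρ' : ρ ∈ Ico 0 1 := Ioo_subset_Ico_self hρ
  have hbdd : ∀ z ∈ Sector θ, ‖h z‖ ≤ C := fun z hz =>
    (hdecay z hz).trans (mul_rpow_div_one_add_rpow_le hC.le (norm_nonneg _))
  obtain ⟨A, hA, hsmall⟩ := exists_norm_tilde_le_mul_norm hθ' hρ' hhol hbdd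
  obtain ⟨B, hB, hlarge⟩ := exists_norm_tilde_le_div_rpow hθ hρ hC hs.le hdecay
  have hs' : min s 1 ∈ Icc 0 1 := ⟨le_min hs.le zero_le_one, min_le_right s 1⟩
  refine ⟨⟨differentiableOn_tilde hθ' (Ioo_subset_Icc_self hρ) hhol, 2 * max A B, min s 1,
    mul_pos two_pos (lt_max_of_lt_right hB), lt_min hs one_pos,
    norm_le_decay_of_le_mul_norm_of_le_div_rpow hA hB.le hs' hsmall hlarge⟩,
    fun M hM z hz => norm_tilde_le_two_mul hθ' hρ' hM hz⟩
end
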